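/- Let f : ℝ/T₀ℤ → ℝ/T₀ℤ be a continuous map and for δ ∈ ℝ define f_δ(t) = f(t) + δ (mod T₀). Suppose there is a nonempty open interval I ⊆ ℝ/T₀ℤ and a constant 0 ≤ c < 1 such that f is differentiable on I with |f'| ≤ c on I (a 'plateau'). Then the set of δ ∈ [0, T₀) for which f_δ has a fixed point t* ∈ I with |f_δ'(t*)| < 1 (hence a stable fixed point) has Lebesgue measure at least (1−c)·|I|, where |I| is the length of I. -/

import Mathlib

open MeasureTheory

/-- If a circle map (given by a lift `f : ℝ → ℝ`) has a 'plateau':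
an interval `(a,b)` of length at most `T₀` on which `|f'| ≤ c < 1`, then the set of
shifts `δ ∈ [0,T₀)` for which the shifted map `f + δ` has a fixed point `t* ∈ (a,b)`
on the circle `ℝ/T₀ℤ` with `|f'(t*)| < 1` (a stable fixed point) has Lebesgue
measure at least `(1−c)·(b−a)`. -/
theorem statement6 (T₀ a b c : ℝ) (hT₀ : 0 < T₀) (hab : a < b) (hlen : b - a ≤ T₀)
    (hc0 : 0 ≤ c) (hc1 : c < 1)
    (f : ℝ → ℝ) (hf : Continuous f)
    (hdiff : ∀ t ∈ Set.Ioo a b, DifferentiableAt ℝ f t ∧ |deriv f t| ≤ c) :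
    (1 - c) * (b - a) ≤
      (volume {δ : ℝ | δ ∈ Set.Ico 0 T₀ ∧
        ∃ t ∈ Set.Ioo a b, (∃ k : ℤ, f t + δ = t + k * T₀) ∧ |deriv f t| < 1}).toReal := by
  set S := {δ : ℝ | δ ∈ Set.Ico 0 T₀ ∧
      ∃ t ∈ Set.Ioo a b, (∃ k : ℤ, f t + δ = t + k * T₀) ∧ |deriv f t| < 1} with hS
  set g : ℝ → ℝ := fun t => t - f t with hgdef
  have hg : Continuous g := continuous_id.sub hf
  -- derivative bound for g
  have hgderiv : ∀ t ∈ Set.Ioo a b, (1 - c) ≤ deriv g t := by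
    intro t ht
    have hd := (hdiff t ht).1
    have : deriv g t = 1 - deriv f t := by
      rw [hgdef]
      rw [deriv_fun_sub differentiableAt_fun_id hd, deriv_id'']
    rw [this]
    have := abs_le.1 (hdiff t ht).2
    linarith [this.2]
  have hgdiff : DifferentiableOn ℝ g (interior (Set.Icc a b)) := by
    rw [interior_Icc]
    intro t ht
    exact (differentiableAt_fun_id.sub (hdiff t ht).1).differentiableWithinAt
  have hmvt : (1 - c) * (b - a) ≤ g b - g a := by
    have := (convex_Icc a b).mul_sub_le_image_sub_of_le_deriv hg.continuousOn hgdiff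
      (by rw [interior_Icc]; exact hgderiv) a (Set.left_mem_Icc.2 hab.le)
      b (Set.right_mem_Icc.2 hab.le) hab.le
    exact this
  set L := min (g b - g a) T₀ with hLdef
  have hL : (1 - c) * (b - a) ≤ L := by
    refine le_min hmvt ?_
    nlinarith
  have hLpos : 0 < L := lt_of_lt_of_le (by nlinarith) hL
  have hLT : L ≤ T₀ := min_le_right _ _
  set u := g a with hu
  set n : ℤ := ⌊u / T₀⌋ with hn
  have hns : (n : ℝ) * T₀ ≤ u := by
    have := Int.floor_le (u / T₀)
    calc (n : ℝ) * T₀ ≤ (u / T₀) * T₀ := by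
          exact mul_le_mul_of_nonneg_right this hT₀.le
      _ = u := div_mul_cancel₀ u hT₀.ne'
  have hns' : u < ((n : ℝ) + 1) * T₀ := by
    have := Int.lt_floor_add_one (u / T₀)
    calc u = (u / T₀) * T₀ := (div_mul_cancel₀ u hT₀.ne').symm
      _ < ((n : ℝ) + 1) * T₀ := by
          exact mul_lt_mul_of_pos_right (by exact_mod_cast this) hT₀
  -- key membership lemma
  have hIVT : Set.Ioo (g a) (g b) ⊆ g '' Set.Ioo a b :=
    intermediate_value_Ioo hab.le hg.continuousOn
  have key : ∀ (δ : ℝ) (m : ℤ), 0 ≤ δ → δ < T₀ → δ + (m : ℝ) * T₀ ∈ Set.Ioo u (u + L) →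
      δ ∈ S := by
    intro δ m hδ0 hδT hmem
    have hmem' : δ + (m : ℝ) * T₀ ∈ Set.Ioo (g a) (g b) := by
      constructor
      · exact hmem.1
      · have : u + L ≤ g b := by
          have := min_le_left (g b - g a) T₀
          simp only [hLdef, hu] at *
          linarith
        linarith [hmem.2]
    obtain ⟨t, ht, hgt⟩ := hIVT hmem'
    refine ⟨⟨hδ0, hδT⟩, t, ht, ⟨-m, ?_⟩, lt_of_le_of_lt (hdiff t ht).2 hc1⟩
    have : t - f t = δ + (m : ℝ) * T₀ := hgt
    push_cast
    linarith
  have hSsub : S ⊆ Set.Ico 0 T₀ := fun δ hδ => hδ.1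
  have hSfin : volume S ≠ ⊤ := by
    refine ne_top_of_le_ne_top ?_ (measure_mono hSsub)
    simp [Real.volume_Ico]
  rw [← ENNReal.ofReal_le_iff_le_toReal hSfin]
  refine le_trans (ENNReal.ofReal_le_ofReal hL) ?_
  rcases le_or_gt (u + L) (((n : ℝ) + 1) * T₀) with hcase | hcase
  · -- single interval
    have hA : Set.Ioo (u - n * T₀) (u - n * T₀ + L) ⊆ S := by
      intro δ hδ
      refine key δ n (by linarith [hδ.1]) (by push_cast at hδ ⊢; nlinarith [hδ.2]) ?_
      constructor <;> [skip; skip] <;> push_cast at hδ ⊢ <;> linarith [hδ.1, hδ.2]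
    calc ENNReal.ofReal L = volume (Set.Ioo (u - n * T₀) (u - n * T₀ + L)) := by
          rw [Real.volume_Ioo]; ring_nf
      _ ≤ volume S := measure_mono hA
  · -- two intervals
    set s := u - (n : ℝ) * T₀ with hsdef
    have hs0 : 0 ≤ s := by push_cast; linarith
    have hsT : s < T₀ := by push_cast at hns' ⊢; linarith
    have hA : Set.Ioo s T₀ ⊆ S := by
      intro δ hδ
      refine key δ n (le_trans hs0 hδ.1.le) hδ.2 ?_
      constructor
      · push_cast; linarith [hδ.1]
      · push_cast at hcase ⊢; linarith [hδ.2]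
    have hB : Set.Ioo 0 (s + L - T₀) ⊆ S := by
      intro δ hδ
      refine key δ (n + 1) hδ.1.le (by linarith [hδ.2]) ?_
      constructor
      · push_cast; linarith [hδ.1]
      · push_cast at hδ ⊢; linarith [hδ.2]
    have hdisj : Disjoint (Set.Ioo s T₀) (Set.Ioo 0 (s + L - T₀)) := by
      rw [Set.disjoint_left]
      intro x hx hx'
      have := hx.1
      have := hx'.2
      linarith
    have hBL : 0 < s + L - T₀ := by push_cast at hcase ⊢; linarith
    calc ENNReal.ofReal L
        = ENNReal.ofReal (T₀ - s) + ENNReal.ofReal (s + L - T₀) := by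
          rw [← ENNReal.ofReal_add (by linarith) hBL.le]; ring_nf
      _ = volume (Set.Ioo s T₀ ∪ Set.Ioo 0 (s + L - T₀)) := by
          rw [measure_union hdisj measurableSet_Ioo, Real.volume_Ioo, Real.volume_Ioo]
          norm_num
      _ ≤ volume S := measure_mono (Set.union_subset hA hB)
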